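/- For all s, t ∈ ℝ and θ ∈ (0,1], one has |h(s)·t| ≤ θ·H(s) + (1/θ)·H(t), where h and H are as in the truncated logarithmic nonlinearity. -/

import Mathlib

noncomputable def h (u : ℝ) : ℝ :=
  if |u| ≤ (Real.exp 1)⁻¹ then -u * Real.log (u ^ 2)
  else if u > (Real.exp 1)⁻¹ then 2 / Real.exp 1
  else -(2 / Real.exp 1)

noncomputable def H (u : ℝ) : ℝ :=
  if |u| ≤ (Real.exp 1)⁻¹ then
    -(1 / 2) * u ^ 2 * Real.log (u ^ 2) + (1 / 2) * u ^ 2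
  else (2 / Real.exp 1) * |u| - 1 / (2 * Real.exp 1 ^ 2)

/-!
On `[0, ∞)` the function `H` is convex with derivative the nondecreasing `h`, so it lies above
its tangents: `H a + h a (b - a) ≤ H b`. Together with `a h a ≤ 2 H a` this gives the Young-type
bound `h a · b ≤ H a + H b`. The same inequality `a h a ≤ 2 H a` says that `H r / r²` is
nonincreasing, i.e. `H (λ t) ≤ λ² H t` for `λ ≥ 1`. Taking `a = |s|`, `b = |t| / θ`, `λ = 1 / θ`
gives the theorem, `h` being odd and `H` even.
-/

open Real Set Filter Topology

lemma log_exp_one_inv : log (exp 1)⁻¹ = -1 := by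
  rw [log_inv, log_exp]

lemma h_of_abs_le {u : ℝ} (hu : |u| ≤ (exp 1)⁻¹) : h u = -u * log (u ^ 2) := by
  rw [h, if_pos hu]

lemma h_of_lt {u : ℝ} (hu : (exp 1)⁻¹ < u) : h u = 2 * (exp 1)⁻¹ := by
  rw [h, if_neg (by rw [abs_of_pos ((inv_pos.2 (exp_pos 1)).trans hu)]; exact hu.not_ge),
    if_pos hu, div_eq_mul_inv]

lemma H_of_abs_le {u : ℝ} (hu : |u| ≤ (exp 1)⁻¹) :
    H u = -(1 / 2) * u ^ 2 * log (u ^ 2) + (1 / 2) * u ^ 2 := by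
  rw [H, if_pos hu]

lemma H_of_le {u : ℝ} (hu : (exp 1)⁻¹ ≤ u) :
    H u = 2 * (exp 1)⁻¹ * u - (exp 1)⁻¹ ^ 2 / 2 := by
  have hu0 : 0 < u := (by positivity : 0 < (exp 1)⁻¹).trans_le hu
  rcases hu.eq_or_lt with rfl | hlt
  · rw [H_of_abs_le (abs_of_pos hu0).le, log_pow, log_exp_one_inv]
    ring
  · rw [H, if_neg (by rw [abs_of_pos hu0]; exact hlt.not_ge), abs_of_pos hu0]
    field_simp

lemma h_neg (u : ℝ) : h (-u) = -h u := by
  by_cases hu : |u| ≤ (exp 1)⁻¹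
  · rw [h_of_abs_le hu, h_of_abs_le (by rwa [abs_neg]), neg_sq]
    ring
  · rw [h, h, abs_neg, if_neg hu, if_neg hu]
    rcases le_or_gt u 0 with hu0 | hu0
    · rw [abs_of_nonpos hu0] at hu
      rw [if_pos (by linarith), if_neg (by linarith [inv_pos.2 (exp_pos 1)]), neg_neg]
    · rw [abs_of_pos hu0] at hu
      rw [if_neg (by linarith [inv_pos.2 (exp_pos 1)]), if_pos (by linarith)]

lemma H_abs (u : ℝ) : H |u| = H u := by
  simp only [H, abs_abs, sq_abs]

lemma H_zero : H 0 = 0 := by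
  simp [H, (exp_pos 1).le]

/-- `h` freezes `-2 v log v` at its maximum point `v = e⁻¹`. -/
lemma h_eq_of_nonneg {u : ℝ} (hu : 0 ≤ u) :
    h u = -2 * (min u (exp 1)⁻¹ * log (min u (exp 1)⁻¹)) := by
  rcases le_or_gt u (exp 1)⁻¹ with hle | hlt
  · rw [min_eq_left hle, h_of_abs_le (by rwa [abs_of_nonneg hu]), log_pow]
    push_cast; ring
  · rw [min_eq_right hlt.le, h_of_lt hlt, log_exp_one_inv]
    ring

lemma monotoneOn_h : MonotoneOn h (Ici 0) := by
  intro x hx y hy hxy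
  have hmin : ∀ z ∈ Ici (0 : ℝ), min z (exp 1)⁻¹ ∈ Icc 0 (exp (-1)) := fun z hz =>
    ⟨le_min hz (inv_pos.2 (exp_pos 1)).le, exp_neg 1 ▸ min_le_right _ _⟩
  have := mul_log_strictAntiOn.antitoneOn (hmin x hx) (hmin y hy) (min_le_min_right _ hxy)
  rw [h_eq_of_nonneg hx, h_eq_of_nonneg hy]
  linarith

lemma h_zero : h 0 = 0 := by
  simp [h, (exp_pos 1).le]

lemma h_nonneg {u : ℝ} (hu : 0 ≤ u) : 0 ≤ h u :=
  h_zero ▸ monotoneOn_h self_mem_Ici hu hu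

lemma abs_h (u : ℝ) : |h u| = h |u| := by
  rcases le_or_gt 0 u with hu | hu
  · rw [abs_of_nonneg hu, abs_of_nonneg (h_nonneg hu)]
  · rw [abs_of_neg hu, h_neg, abs_of_nonpos (neg_nonneg.1 (h_neg u ▸ h_nonneg (by linarith)))]

lemma hasDerivAt_H_inner {x : ℝ} (hx : x ≠ 0) :
    HasDerivAt (fun u => -(1 / 2) * u ^ 2 * log (u ^ 2) + (1 / 2) * u ^ 2)
      (-x * log (x ^ 2)) x := by
  have := (((hasDerivAt_pow 2 x).const_mul (-(1 / 2))).mul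
    ((hasDerivAt_pow 2 x).log (pow_ne_zero 2 hx))).add ((hasDerivAt_pow 2 x).const_mul (1 / 2))
  refine this.congr_deriv ?_
  field_simp
  ring

lemma H_eventuallyEq_inner {x : ℝ} (hx : |x| < (exp 1)⁻¹) :
    H =ᶠ[𝓝 x] fun u => -(1 / 2) * u ^ 2 * log (u ^ 2) + (1 / 2) * u ^ 2 :=
  eventually_of_mem ((isOpen_lt continuous_abs continuous_const).mem_nhds hx) fun _ hu =>
    H_of_abs_le (le_of_lt hu)

lemma hasDerivAt_H {x : ℝ} (hx : 0 < x) : HasDerivAt H (h x) x := by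
  have hc : 0 < (exp 1)⁻¹ := by positivity
  have hG : ∀ y : ℝ, HasDerivAt (fun u => 2 * (exp 1)⁻¹ * u - (exp 1)⁻¹ ^ 2 / 2)
      (2 * (exp 1)⁻¹) y := fun y => by
    simpa using ((hasDerivAt_id y).const_mul (2 * (exp 1)⁻¹)).sub_const ((exp 1)⁻¹ ^ 2 / 2)
  rcases lt_trichotomy x (exp 1)⁻¹ with hlt | rfl | hgt
  · have hx' : |x| < (exp 1)⁻¹ := by rwa [abs_of_pos hx]
    rw [h_of_abs_le hx'.le]
    exact (hasDerivAt_H_inner hx.ne').congr_of_eventuallyEq (H_eventuallyEq_inner hx')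
  · have hval : h (exp 1)⁻¹ = 2 * (exp 1)⁻¹ := by
      rw [h_of_abs_le (abs_of_pos hc).le, log_pow, log_exp_one_inv]
      ring
    have hleft : HasDerivWithinAt H (h (exp 1)⁻¹) (Iic (exp 1)⁻¹) (exp 1)⁻¹ := by
      rw [h_of_abs_le (abs_of_pos hc).le]
      exact (hasDerivAt_H_inner hc.ne').hasDerivWithinAt.congr_of_eventuallyEq
        (eventually_of_mem (Icc_mem_nhdsLE hc) fun u hu =>
          H_of_abs_le (abs_le.2 ⟨by linarith [hu.1], hu.2⟩))
        (H_of_abs_le (abs_of_pos hc).le)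
    have hright : HasDerivWithinAt H (h (exp 1)⁻¹) (Ici (exp 1)⁻¹) (exp 1)⁻¹ :=
      hval ▸ (hG _).hasDerivWithinAt.congr (fun u hu => H_of_le hu) (H_of_le le_rfl)
    simpa [Iic_union_Ici] using hleft.union hright
  · have hev : H =ᶠ[𝓝 x] fun u => 2 * (exp 1)⁻¹ * u - (exp 1)⁻¹ ^ 2 / 2 :=
      eventually_of_mem (Ioi_mem_nhds hgt) fun u hu => H_of_le (le_of_lt hu)
    rw [h_of_lt hgt]
    exact (hG x).congr_of_eventuallyEq hev

lemma continuousOn_H : ContinuousOn H (Ici 0) := by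
  intro x hx
  rcases (mem_Ici.1 hx).eq_or_lt with rfl | hpos
  · have hinner : Continuous fun u : ℝ => -(1 / 2) * u ^ 2 * log (u ^ 2) + (1 / 2) * u ^ 2 := by
      simp only [mul_assoc]
      fun_prop
    refine (hinner.continuousAt.congr (H_eventuallyEq_inner ?_).symm).continuousWithinAt
    simpa using inv_pos.2 (exp_pos 1)
  · exact (hasDerivAt_H hpos).continuousAt.continuousWithinAt

lemma H_add_h_mul_sub_le {a b : ℝ} (ha : 0 ≤ a) (hb : 0 ≤ b) : H a + h a * (b - a) ≤ H b := by
  have hmvt : ∀ {x y : ℝ}, 0 ≤ x → x < y → ∃ ξ ∈ Ioo x y, h ξ = (H y - H x) / (y - x) :=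
    fun hx hxy => exists_hasDerivAt_eq_slope H h hxy
      (continuousOn_H.mono fun _ hz => hx.trans hz.1) fun _ hz => hasDerivAt_H (hx.trans_lt hz.1)
  rcases lt_trichotomy a b with hab | rfl | hab
  · obtain ⟨ξ, hξ, hslope⟩ := hmvt ha hab
    have := monotoneOn_h ha (ha.trans hξ.1.le) hξ.1.le
    rw [hslope, le_div_iff₀ (sub_pos.2 hab)] at this
    linarith
  · simp
  · obtain ⟨ξ, hξ, hslope⟩ := hmvt hb hab
    have := monotoneOn_h (hb.trans hξ.1.le) ha hξ.2.le
    rw [hslope, div_le_iff₀ (sub_pos.2 hab)] at this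
    linarith

lemma h_mul_self_le_two_mul_H {a : ℝ} (ha : 0 ≤ a) : h a * a ≤ 2 * H a := by
  rcases le_or_gt a (exp 1)⁻¹ with hle | hlt
  · have habs : |a| ≤ (exp 1)⁻¹ := by rwa [abs_of_nonneg ha]
    rw [h_of_abs_le habs, H_of_abs_le habs]
    nlinarith [sq_nonneg a]
  · rw [h_of_lt hlt, H_of_le hlt.le]
    nlinarith [inv_pos.2 (exp_pos 1)]

lemma h_mul_le_H_add_H {a b : ℝ} (ha : 0 ≤ a) (hb : 0 ≤ b) : h a * b ≤ H a + H b := by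
  linarith [H_add_h_mul_sub_le ha hb, h_mul_self_le_two_mul_H ha]

lemma antitoneOn_H_div_sq : AntitoneOn (fun r => H r / r ^ 2) (Ioi 0) := by
  have hderiv : ∀ r ∈ Ioi (0 : ℝ), HasDerivAt (fun r => H r / r ^ 2)
      ((h r * r ^ 2 - H r * (2 * r)) / (r ^ 2) ^ 2) r := fun r hr =>
    ((hasDerivAt_H hr).div (hasDerivAt_pow 2 r) (pow_ne_zero 2 (ne_of_gt hr))).congr_deriv
      (by simp)
  refine antitoneOn_of_deriv_nonpos (convex_Ioi 0)
    (fun r hr => (hderiv r hr).continuousAt.continuousWithinAt) ?_ ?_ <;> rw [interior_Ioi]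
  · exact fun r hr => (hderiv r hr).differentiableAt.differentiableWithinAt
  · intro r hr
    rw [(hderiv r hr).deriv]
    refine div_nonpos_of_nonpos_of_nonneg ?_ (by positivity)
    nlinarith [mul_le_mul_of_nonneg_left (h_mul_self_le_two_mul_H (le_of_lt hr)) (le_of_lt hr)]

lemma H_mul_le_sq_mul_H {l t : ℝ} (hl : 1 ≤ l) (ht : 0 ≤ t) : H (l * t) ≤ l ^ 2 * H t := by
  rcases ht.eq_or_lt with rfl | ht
  · simp [H_zero]
  · have := antitoneOn_H_div_sq ht (mul_pos (by linarith) ht) (le_mul_of_one_le_left ht.le hl)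
    dsimp only at this
    rw [mul_pow, ← div_div, div_le_div_iff_of_pos_right (by positivity),
      div_le_iff₀ (by positivity)] at this
    linarith

theorem young_type_inequality :
    ∀ s t : ℝ, ∀ θ ∈ Set.Ioc (0 : ℝ) 1, |h s * t| ≤ θ * H s + (1 / θ) * H t := by
  intro s t θ ⟨hθ0, hθ1⟩
  have hyoung : h |s| * (θ⁻¹ * |t|) ≤ H |s| + H (θ⁻¹ * |t|) :=
    h_mul_le_H_add_H (abs_nonneg s) (by positivity)
  have hscale : H (θ⁻¹ * |t|) ≤ θ⁻¹ ^ 2 * H |t| :=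
    H_mul_le_sq_mul_H (one_le_inv₀ hθ0 |>.2 hθ1) (abs_nonneg t)
  rw [← H_abs s, ← H_abs t, abs_mul, abs_h]
  calc h |s| * |t| = θ * (h |s| * (θ⁻¹ * |t|)) := by field_simp
    _ ≤ θ * (H |s| + θ⁻¹ ^ 2 * H |t|) := by gcongr; linarith
    _ = θ * H |s| + 1 / θ * H |t| := by field_simp
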